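/- arXiv:1808.04855 — 3 statements merged into one kernel-verified Lean document; each statement's English description precedes it below -/
import Mathlib

section
/- Let M₀, M₁ be invertible 2×2 real matrices and for t ∈ [0,1] define M_t := (1-t)·M₀ + t·M₁. If M_t is invertible, then M_t⁻¹ = ((1-t)·M₀⁻¹ + det(M₁M₀⁻¹)·t·M₁⁻¹) / (det(M₁M₀⁻¹)·t² + tr(M₁M₀⁻¹)·t(1-t) + (1-t)²). -/
/-!
In dimension two the adjugate is linear, so `adj M_t = (1-t) adj M₀ + t adj M₁`, and
`adj Mᵢ = det Mᵢ • Mᵢ⁻¹`. Factoring `M_t = ((1-t) • 1 + t • A) * M₀` with `A = M₁ M₀⁻¹` gives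
`det M_t = det M₀ · ((1-t)² + t(1-t) tr A + t² det A)`, while `det M₁ = det M₀ · det A`;
the common factor `det M₀` cancels in `M_t⁻¹ = (det M_t)⁻¹ • adj M_t`.
-/

open Matrix

namespace Matrix

variable {R : Type*} [CommRing R]

theorem adjugate_fin_two_add (A B : Matrix (Fin 2) (Fin 2) R) :
    adjugate (A + B) = adjugate A + adjugate B := by
  ext i j
  fin_cases i <;> fin_cases j <;> simp [adjugate_fin_two, add_comm]

theorem adjugate_fin_two_smul_add_smul (a b : R) (A B : Matrix (Fin 2) (Fin 2) R) :
    adjugate (a • A + b • B) = a • adjugate A + b • adjugate B := by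
  simp [adjugate_fin_two_add, adjugate_smul]

theorem det_fin_two_smul_one_add_smul (a b : R) (A : Matrix (Fin 2) (Fin 2) R) :
    det (a • (1 : Matrix (Fin 2) (Fin 2) R) + b • A) =
      a ^ 2 + a * b * trace A + b ^ 2 * det A := by
  rw [det_fin_two, det_fin_two, trace_fin_two]
  simp only [add_apply, smul_apply, one_apply_eq, one_apply_ne zero_ne_one,
    one_apply_ne one_ne_zero, smul_eq_mul]
  ring

variable {n K : Type*} [Fintype n] [DecidableEq n] [Field K]

theorem adjugate_eq_det_smul_inv (A : Matrix n n K) (hA : IsUnit A) :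
    adjugate A = det A • A⁻¹ := by
  have hdet : det A ≠ 0 := ((isUnit_iff_isUnit_det A).mp hA).ne_zero
  rw [inv_def, Ring.inverse_eq_inv, smul_smul, mul_inv_cancel₀ hdet, one_smul]

theorem det_smul_add_smul_of_isUnit (a b : K) (M₀ M₁ : Matrix n n K) (h₀ : IsUnit M₀) :
    det (a • M₀ + b • M₁) = det (a • (1 : Matrix n n K) + b • (M₁ * M₀⁻¹)) * det M₀ := by
  rw [← det_mul, add_mul, smul_mul, smul_mul, Matrix.one_mul, Matrix.mul_assoc,
    nonsing_inv_mul _ ((isUnit_iff_isUnit_det M₀).mp h₀), Matrix.mul_one]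

end Matrix

theorem stmt_0_general (M₀ M₁ : Matrix (Fin 2) (Fin 2) ℝ)
    (h₀ : IsUnit M₀) (h₁ : IsUnit M₁) (t : ℝ)
    (Mt : Matrix (Fin 2) (Fin 2) ℝ) (hMt : Mt = (1 - t) • M₀ + t • M₁) :
    Mt⁻¹ = ((M₁ * M₀⁻¹).det * t ^ 2 + (M₁ * M₀⁻¹).trace * (t * (1 - t)) + (1 - t) ^ 2)⁻¹ •
      ((1 - t) • M₀⁻¹ + ((M₁ * M₀⁻¹).det * t) • M₁⁻¹) := by
  set A := M₁ * M₀⁻¹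
  have hd₀ : det M₀ ≠ 0 := ((isUnit_iff_isUnit_det M₀).mp h₀).ne_zero
  have hdet₁ : det M₁ = det A * det M₀ := by
    rw [det_mul, det_nonsing_inv, Ring.inverse_eq_inv, mul_assoc, inv_mul_cancel₀ hd₀, mul_one]
  have hdet : det Mt =
      (det A * t ^ 2 + trace A * (t * (1 - t)) + (1 - t) ^ 2) * det M₀ := by
    rw [hMt, det_smul_add_smul_of_isUnit _ _ _ _ h₀, det_fin_two_smul_one_add_smul]
    ring
  have hadj : adjugate Mt = det M₀ • ((1 - t) • M₀⁻¹ + (det A * t) • M₁⁻¹) := by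
    rw [hMt, adjugate_fin_two_smul_add_smul, adjugate_eq_det_smul_inv _ h₀,
      adjugate_eq_det_smul_inv _ h₁, hdet₁]
    module
  rw [inv_def, Ring.inverse_eq_inv, hadj, hdet, smul_smul, mul_inv,
    inv_mul_cancel_right₀ hd₀]

theorem stmt_0 (M₀ M₁ : Matrix (Fin 2) (Fin 2) ℝ)
    (h₀ : IsUnit M₀) (h₁ : IsUnit M₁) (t : ℝ) (ht : t ∈ Set.Icc (0:ℝ) 1)
    (Mt : Matrix (Fin 2) (Fin 2) ℝ) (hMt : Mt = (1 - t) • M₀ + t • M₁)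
    (hinv : IsUnit Mt) :
    Mt⁻¹ = ((M₁ * M₀⁻¹).det * t ^ 2 + (M₁ * M₀⁻¹).trace * (t * (1 - t)) + (1 - t) ^ 2)⁻¹ •
      ((1 - t) • M₀⁻¹ + ((M₁ * M₀⁻¹).det * t) • M₁⁻¹) :=
  stmt_0_general M₀ M₁ h₀ h₁ t Mt hMt
end

section
/- For all a, b ∈ (0,1) with a ≠ b and a + b > 1, we have 3a(a-1) + 3b(b-1) + 8ab > 0, and hence ρ*_{a,b} > 1. -/
/-! Writing `s = a + b`, the factor `3a(a-1) + 3b(b-1) + 8ab` equals `3s(s-1) + 2ab`, which is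
positive once `s > 1`. The fraction in the Chernoff ratio is then a product of positive terms over
`4s² (a(1-a) + b(1-b)) > 0`, so the ratio exceeds `1` as soon as `a ≠ b`. -/

lemma chernoff_factor_eq (a b : ℝ) :
    3 * a * (a - 1) + 3 * b * (b - 1) + 8 * a * b = 3 * (a + b) * (a + b - 1) + 2 * a * b := by
  ring

lemma chernoff_factor_pos {a b : ℝ} (ha : 0 < a) (hb : 0 < b) (hsum : 1 < a + b) :
    0 < 3 * a * (a - 1) + 3 * b * (b - 1) + 8 * a * b := by
  rw [chernoff_factor_eq]
  have hs : 0 < a + b - 1 := sub_pos.2 hsum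
  positivity

lemma mul_one_sub_pos {a : ℝ} (ha : a ∈ Set.Ioo (0 : ℝ) 1) : 0 < a * (1 - a) :=
  mul_pos ha.1 (sub_pos.2 ha.2)

theorem stmt_4 (a b : ℝ) (ha : a ∈ Set.Ioo (0:ℝ) 1) (hb : b ∈ Set.Ioo (0:ℝ) 1)
    (hab : a ≠ b) (hsum : a + b > 1) :
    3 * a * (a - 1) + 3 * b * (b - 1) + 8 * a * b > 0 ∧
    1 + (a - b) ^ 2 * (3 * a * (a - 1) + 3 * b * (b - 1) + 8 * a * b) /
      (4 * (a + b) ^ 2 * (a * (1 - a) + b * (1 - b))) > 1 := by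
  have hfactor := chernoff_factor_pos ha.1 hb.1 hsum
  have hdiff : 0 < (a - b) ^ 2 := sq_pos_of_ne_zero (sub_ne_zero.2 hab)
  have hden : 0 < 4 * (a + b) ^ 2 * (a * (1 - a) + b * (1 - b)) := by
    have hs : 0 < a + b := add_pos ha.1 hb.1
    have hvar := add_pos (mul_one_sub_pos ha) (mul_one_sub_pos hb)
    positivity
  exact ⟨hfactor, lt_add_of_pos_right 1 (div_pos (mul_pos hdiff hfactor) hden)⟩
end

section
/- Fix p ∈ (0,1) and π₁ ∈ (0,1), π₂ = 1 - π₁. Define for q ∈ (0,1), q ≠ p: ρ*(q) := ((√p + √q)²(π₁p² + π₂q²)²(√(π₁p(1-p²) + π₂q(1-pq)) + √(π₁p(1-pq) + π₂q(1-q²)))²) / (4(π₁p + π₂q)²(√(π₁p⁴(1-p²) + π₂pq³(1-pq)) + √(π₁p³q(1-pq) + π₂q⁴(1-q²)))²). Then as q → 0⁺, ρ*(q) → (1 + √(1-p²))² / (4(1-p²)), and this limit is strictly greater than 1. -/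
/-!
The ratio is continuous at `q = 0`, where its denominator is `4 π₁³ p⁶ (1 - p²) > 0`, so the
one-sided limit is simply the value at `0`; there all powers of `π₁` and `p` cancel. The limit
exceeds `1` because `1 + s > 2 s` for `s = √(1 - p²) < 1`.
-/

open Filter Real

noncomputable def chernoffRatio (p π₁ π₂ q : ℝ) : ℝ :=
  ((√p + √q) ^ 2 * (π₁ * p ^ 2 + π₂ * q ^ 2) ^ 2 *
      (√(π₁ * p * (1 - p ^ 2) + π₂ * q * (1 - p * q)) +
        √(π₁ * p * (1 - p * q) + π₂ * q * (1 - q ^ 2))) ^ 2) /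
    (4 * (π₁ * p + π₂ * q) ^ 2 *
      (√(π₁ * p ^ 4 * (1 - p ^ 2) + π₂ * p * q ^ 3 * (1 - p * q)) +
        √(π₁ * p ^ 3 * q * (1 - p * q) + π₂ * q ^ 4 * (1 - q ^ 2))) ^ 2)

section

variable {p π₁ : ℝ} (π₂ : ℝ) (hp : 0 < p) (hπ₁ : 0 < π₁) (hp₁ : 0 < 1 - p ^ 2)
include hp hπ₁ hp₁

lemma chernoffRatio_zero :
    chernoffRatio p π₁ π₂ 0 = (1 + √(1 - p ^ 2)) ^ 2 / (4 * (1 - p ^ 2)) := by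
  have h_sqrt_mul : √(π₁ * p * (1 - p ^ 2)) = √(π₁ * p) * √(1 - p ^ 2) :=
    sqrt_mul (by positivity) _
  have hsq_p : √p ^ 2 = p := sq_sqrt hp.le
  have hsq_π₁p : √(π₁ * p) ^ 2 = π₁ * p := sq_sqrt (by positivity)
  have hsq_den : √(π₁ * p ^ 4 * (1 - p ^ 2)) ^ 2 = π₁ * p ^ 4 * (1 - p ^ 2) :=
    sq_sqrt (by positivity)
  simp only [chernoffRatio, sqrt_zero, mul_zero, sub_zero, add_zero, mul_one,
    zero_pow two_ne_zero, zero_pow three_ne_zero, zero_pow four_ne_zero]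
  rw [h_sqrt_mul, show (√(π₁ * p) * √(1 - p ^ 2) + √(π₁ * p)) ^ 2
      = √(π₁ * p) ^ 2 * (1 + √(1 - p ^ 2)) ^ 2 by ring, hsq_p, hsq_π₁p, hsq_den]
  field_simp

lemma continuousAt_chernoffRatio_zero : ContinuousAt (chernoffRatio p π₁ π₂) 0 := by
  have hden : 4 * (π₁ * p + π₂ * 0) ^ 2 *
      (√(π₁ * p ^ 4 * (1 - p ^ 2) + π₂ * p * 0 ^ 3 * (1 - p * 0)) +
        √(π₁ * p ^ 3 * 0 * (1 - p * 0) + π₂ * 0 ^ 4 * (1 - 0 ^ 2))) ^ 2 ≠ 0 := by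
    have : 0 < √(π₁ * p ^ 4 * (1 - p ^ 2)) := sqrt_pos.mpr (by positivity)
    simp only [mul_zero, zero_mul, add_zero, sqrt_zero, zero_pow three_ne_zero,
      zero_pow four_ne_zero]
    positivity
  unfold chernoffRatio
  exact ContinuousAt.div (by fun_prop) (by fun_prop) hden

end

lemma one_lt_one_add_sqrt_sq_div {t : ℝ} (ht₀ : 0 < t) (ht₁ : t < 1) :
    1 < (1 + √t) ^ 2 / (4 * t) := by
  have hs_lt : √t < 1 := (sqrt_lt' one_pos).mpr (by simpa using ht₁)
  have hs_sq : √t ^ 2 = t := sq_sqrt ht₀.le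
  have hs_pos : 0 < √t := sqrt_pos.mpr ht₀
  rw [one_lt_div (by positivity)]
  nlinarith [mul_pos (sub_pos.mpr hs_lt) (by positivity : 0 < 1 + 3 * √t)]

theorem stmt_16_general (p π₁ : ℝ) (hp : p ∈ Set.Ioo (0:ℝ) 1) (hπ : π₁ ∈ Set.Ioo (0:ℝ) 1)
    (π₂ : ℝ)
    (ρ : ℝ → ℝ)
    (hρ : ∀ q : ℝ, ρ q =
      ((Real.sqrt p + Real.sqrt q) ^ 2 * (π₁ * p ^ 2 + π₂ * q ^ 2) ^ 2 *
        (Real.sqrt (π₁ * p * (1 - p ^ 2) + π₂ * q * (1 - p * q)) +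
         Real.sqrt (π₁ * p * (1 - p * q) + π₂ * q * (1 - q ^ 2))) ^ 2) /
      (4 * (π₁ * p + π₂ * q) ^ 2 *
        (Real.sqrt (π₁ * p ^ 4 * (1 - p ^ 2) + π₂ * p * q ^ 3 * (1 - p * q)) +
         Real.sqrt (π₁ * p ^ 3 * q * (1 - p * q) + π₂ * q ^ 4 * (1 - q ^ 2))) ^ 2)) :
    Tendsto ρ (nhdsWithin 0 (Set.Ioi 0)) (nhds ((1 + Real.sqrt (1 - p ^ 2)) ^ 2 / (4 * (1 - p ^ 2)))) ∧
    (1 + Real.sqrt (1 - p ^ 2)) ^ 2 / (4 * (1 - p ^ 2)) > 1 := by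
  obtain ⟨hp₀, hp₁⟩ := hp
  have hq₀ : 0 < 1 - p ^ 2 := by nlinarith
  have hρ_eq : ρ = chernoffRatio p π₁ π₂ := funext hρ
  refine ⟨?_, one_lt_one_add_sqrt_sq_div hq₀ (by nlinarith)⟩
  rw [hρ_eq, ← chernoffRatio_zero π₂ hp₀ hπ.1 hq₀]
  exact (continuousAt_chernoffRatio_zero π₂ hp₀ hπ.1 hq₀).tendsto.mono_left nhdsWithin_le_nhds

theorem stmt_16 (p π₁ : ℝ) (hp : p ∈ Set.Ioo (0:ℝ) 1) (hπ : π₁ ∈ Set.Ioo (0:ℝ) 1)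
    (π₂ : ℝ) (hπ₂ : π₂ = 1 - π₁)
    (ρ : ℝ → ℝ)
    (hρ : ∀ q : ℝ, ρ q =
      ((Real.sqrt p + Real.sqrt q) ^ 2 * (π₁ * p ^ 2 + π₂ * q ^ 2) ^ 2 *
        (Real.sqrt (π₁ * p * (1 - p ^ 2) + π₂ * q * (1 - p * q)) +
         Real.sqrt (π₁ * p * (1 - p * q) + π₂ * q * (1 - q ^ 2))) ^ 2) /
      (4 * (π₁ * p + π₂ * q) ^ 2 *
        (Real.sqrt (π₁ * p ^ 4 * (1 - p ^ 2) + π₂ * p * q ^ 3 * (1 - p * q)) +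
         Real.sqrt (π₁ * p ^ 3 * q * (1 - p * q) + π₂ * q ^ 4 * (1 - q ^ 2))) ^ 2)) :
    Tendsto ρ (nhdsWithin 0 (Set.Ioi 0)) (nhds ((1 + Real.sqrt (1 - p ^ 2)) ^ 2 / (4 * (1 - p ^ 2)))) ∧
    (1 + Real.sqrt (1 - p ^ 2)) ^ 2 / (4 * (1 - p ^ 2)) > 1 :=
  stmt_16_general p π₁ hp hπ π₂ ρ hρ
end
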